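/- Let P be the 3×3 real matrix with rows (1, −1/2, 0), (−1/2, 1, 0), (0, 0, 3), let R be the 3×3 real matrix with rows (√3/2, 0, 0), (−1/2, 1, 0), (0, 0, √3), and write R^{-T} = (Rᵀ)⁻¹. Let n_p, m_p > 0 and for i ∈ {1, 2} set αᵢ = (−1)^i/(2√3), f_i(m, n) = nᵀPn/n_p² + mᵀPm/m_p² + ((−1)^i/√3)·mᵀPn/(n_p m_p) for m, n ∈ ℝ³, and let Tᵢ be the 6×6 block matrix with blocks (Tᵢ)₁₁ = 0, (Tᵢ)₁₂ = n_p·R^{-T}, (Tᵢ)₂₁ = (m_p/√(1 − αᵢ²))·R^{-T}, (Tᵢ)₂₂ = −(αᵢ n_p/√(1 − αᵢ²))·R^{-T}. Then for every (κ, ε) ∈ ℝ³ × ℝ³, sup { mᵀκ + nᵀε : (m, n) ∈ ℝ³ × ℝ³, f₁(m, n) ≤ 1 and f₂(m, n) ≤ 1 } = min over all decompositions (κ, ε) = (κ₁, ε₁) + (κ₂, ε₂) in ℝ³ × ℝ³ of ( ‖T₁·(κ₁, ε₁)‖ + ‖T₂·(κ₂, ε₂)‖ ), where ‖·‖ is the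 Euclidean norm on ℝ⁶ and the minimum is attained. -/

import Mathlib

/-!
Write `fᵢ(w) = ‖R̃ᵢ w‖²` with `Tᵢᵀ R̃ᵢ = 1`. Then `fᵢ(w) ≤ 1` says exactly that the functional
`⟪w, ·⟫` is dominated by `x ↦ ‖Tᵢ x‖`, so the left-hand side is the largest value at `(κ, ε)` of
a linear functional dominated by both of these seminorms, that is, by their infimal convolution
`p₁ ⊓ p₂`. Hahn–Banach and Riesz produce such a functional attaining `(p₁ ⊓ p₂) (κ, ε)`, and the
infimum defining the infimal convolution is a minimum because `x ↦ ‖T₁ x‖` is coercive.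
-/

open Matrix Filter Topology WithLp
open scoped InnerProductSpace

namespace Seminorm

variable {E : Type*}

theorem exists_linearMap_le_eq [AddCommGroup E] [Module ℝ E] (p : Seminorm ℝ E) (z : E) :
    ∃ g : E →ₗ[ℝ] ℝ, g z = p z ∧ ∀ x, g x ≤ p x := by
  have hz : ∀ c : ℝ, c • z = 0 → c • p z = 0 := fun c hc => by
    rcases smul_eq_zero.mp hc with rfl | rfl <;> simp
  set f := LinearPMap.mkSpanSingleton' (R := ℝ) (σ := RingHom.id ℝ) z (p z) hz
  have hfp : ∀ x : f.domain, f x ≤ p x := by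
    rintro ⟨x, hx⟩
    obtain ⟨t, rfl⟩ := Submodule.mem_span_singleton.mp hx
    rw [LinearPMap.mkSpanSingleton'_apply, smul_eq_mul, map_smul_eq_mul, Real.norm_eq_abs]
    exact mul_le_mul_of_nonneg_right (le_abs_self t) (apply_nonneg p z)
  obtain ⟨g, hgf, hgp⟩ := exists_extension_of_le_sublinear f p
    (fun c hc x => by rw [map_smul_eq_mul, Real.norm_of_nonneg hc.le]) (map_add_le_add p) hfp
  exact ⟨g, (hgf ⟨z, Submodule.mem_span_singleton_self z⟩).trans
    (LinearPMap.mkSpanSingleton'_apply_self _ _ _ _), hgp⟩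

theorem isLeast_inf_apply [NormedAddCommGroup E] [NormedSpace ℝ E] [ProperSpace E]
    (p q : Seminorm ℝ E) (hp : Continuous p) (hq : Continuous q)
    (hp_coercive : Tendsto p (cocompact E) atTop) (z : E) :
    IsLeast (Set.range fun u => p u + q (z - u)) ((p ⊓ q) z) := by
  have hcont : Continuous fun u => p u + q (z - u) := hp.add (hq.comp (continuous_sub_left z))
  obtain ⟨u, hu⟩ := hcont.exists_forall_le <|
    tendsto_atTop_mono (fun u => le_add_of_nonneg_right (apply_nonneg q _)) hp_coercive
  have hmin : IsLeast (Set.range fun u => p u + q (z - u)) (p u + q (z - u)) :=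
    ⟨⟨u, rfl⟩, by rintro _ ⟨v, rfl⟩; exact hu v⟩
  rwa [inf_apply, ← sInf_range, hmin.csInf_eq]

theorem isGreatest_inner_inf_apply [NormedAddCommGroup E] [InnerProductSpace ℝ E]
    [FiniteDimensional ℝ E] (p q : Seminorm ℝ E) (z : E) :
    IsGreatest {r | ∃ w : E, (∀ x, ⟪w, x⟫_ℝ ≤ p x) ∧ (∀ x, ⟪w, x⟫_ℝ ≤ q x) ∧ r = ⟪w, z⟫_ℝ}
      ((p ⊓ q) z) := by
  refine ⟨?_, ?_⟩
  · obtain ⟨g, hgz, hg⟩ := (p ⊓ q).exists_linearMap_le_eq z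
    set w := (InnerProductSpace.toDual ℝ E).symm (LinearMap.toContinuousLinearMap g)
    have hw : ∀ x, ⟪w, x⟫_ℝ = g x := fun x => by simp [w]
    refine ⟨w, fun x => ?_, fun x => ?_, by rw [hw, hgz]⟩
    · exact (hw x).trans_le ((hg x).trans (inf_le_left (a := p) (b := q) x))
    · exact (hw x).trans_le ((hg x).trans (inf_le_right (a := p) (b := q) x))
  · rintro _ ⟨w, hp, hq, rfl⟩
    rw [inf_apply]
    refine le_ciInf fun u => ?_
    calc ⟪w, z⟫_ℝ = ⟪w, u⟫_ℝ + ⟪w, z - u⟫_ℝ := by rw [← inner_add_right, add_sub_cancel]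
      _ ≤ p u + q (z - u) := add_le_add (hp u) (hq _)

end Seminorm

section InnerProductSpace

variable {E F : Type*} [NormedAddCommGroup E] [InnerProductSpace ℝ E] [NormedAddCommGroup F]
  [InnerProductSpace ℝ F]

theorem norm_le_one_iff_forall_inner_le (A B : E → F)
    (hA : Function.Surjective A) (hAB : ∀ w x, ⟪A x, B w⟫_ℝ = ⟪w, x⟫_ℝ) (w : E) :
    ‖B w‖ ≤ 1 ↔ ∀ x, ⟪w, x⟫_ℝ ≤ ‖A x‖ := by
  refine ⟨fun hw x => ?_, fun h => ?_⟩
  · calc ⟪w, x⟫_ℝ = ⟪A x, B w⟫_ℝ := (hAB w x).symm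
      _ ≤ ‖A x‖ * ‖B w‖ := real_inner_le_norm _ _
      _ ≤ ‖A x‖ := mul_le_of_le_one_right (norm_nonneg _) hw
  · obtain ⟨x, hx⟩ := hA (B w)
    have : ‖B w‖ ^ 2 ≤ ‖B w‖ :=
      calc ‖B w‖ ^ 2 = ⟪A x, B w⟫_ℝ := by rw [hx, real_inner_self_eq_norm_sq]
        _ = ⟪w, x⟫_ℝ := hAB w x
        _ ≤ ‖B w‖ := hx ▸ h x
    nlinarith [norm_nonneg (B w)]

variable [FiniteDimensional ℝ E]

theorem LinearMap.bijective_of_forall_inner_map_eq (A : E →ₗ[ℝ] E) (B : E → E)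
    (hAB : ∀ w x, ⟪A x, B w⟫_ℝ = ⟪w, x⟫_ℝ) : Function.Bijective A := by
  have hinj : Function.Injective A := fun x y hxy =>
    ext_inner_left ℝ fun w => by rw [← hAB w x, hxy, hAB]
  exact ⟨hinj, A.injective_iff_surjective.mp hinj⟩

theorem isLeast_norm_add_norm_sSup_inner (A₁ A₂ : E →L[ℝ] E) (B₁ B₂ : E → E)
    (h₁ : ∀ w x, ⟪A₁ x, B₁ w⟫_ℝ = ⟪w, x⟫_ℝ) (h₂ : ∀ w x, ⟪A₂ x, B₂ w⟫_ℝ = ⟪w, x⟫_ℝ) (z : E) :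
    IsLeast {s | ∃ x₁ x₂, z = x₁ + x₂ ∧ s = ‖A₁ x₁‖ + ‖A₂ x₂‖}
      (sSup {r | ∃ w, ‖B₁ w‖ ≤ 1 ∧ ‖B₂ w‖ ≤ 1 ∧ r = ⟪w, z⟫_ℝ}) := by
  set p : (E →L[ℝ] E) → Seminorm ℝ E := fun A => (normSeminorm ℝ E).comp (A : E →ₗ[ℝ] E)
  have hbij₁ := LinearMap.bijective_of_forall_inner_map_eq (A₁ : E →ₗ[ℝ] E) B₁ h₁
  have hbij₂ := LinearMap.bijective_of_forall_inner_map_eq (A₂ : E →ₗ[ℝ] E) B₂ h₂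
  have hF : {r | ∃ w, ‖B₁ w‖ ≤ 1 ∧ ‖B₂ w‖ ≤ 1 ∧ r = ⟪w, z⟫_ℝ} =
      {r | ∃ w : E, (∀ x, ⟪w, x⟫_ℝ ≤ p A₁ x) ∧ (∀ x, ⟪w, x⟫_ℝ ≤ p A₂ x) ∧ r = ⟪w, z⟫_ℝ} := by
    simp only [norm_le_one_iff_forall_inner_le A₁ B₁ hbij₁.2 h₁,
      norm_le_one_iff_forall_inner_le A₂ B₂ hbij₂.2 h₂]
    rfl
  have hcoercive : Tendsto (p A₁) (cocompact E) atTop :=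
    tendsto_norm_cocompact_atTop.comp
      ((A₁ : E →ₗ[ℝ] E).isClosedEmbedding_of_injective
        (LinearMap.ker_eq_bot.mpr hbij₁.1)).tendsto_cocompact
  rw [hF, (Seminorm.isGreatest_inner_inf_apply _ _ z).csSup_eq]
  convert Seminorm.isLeast_inf_apply (p A₁) (p A₂) A₁.continuous.norm A₂.continuous.norm
    hcoercive z using 1
  ext s
  constructor
  · rintro ⟨x₁, x₂, rfl, rfl⟩
    exact ⟨x₁, by simp [p]⟩
  · rintro ⟨u, rfl⟩
    exact ⟨u, z - u, (add_sub_cancel u z).symm, rfl⟩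

end InnerProductSpace

theorem EuclideanSpace.norm_toLp_sq {n : Type*} [Fintype n] (v : n → ℝ) :
    ‖toLp 2 v‖ ^ 2 = v ⬝ᵥ v := by
  rw [← real_inner_self_eq_norm_sq, EuclideanSpace.inner_toLp_toLp, star_trivial]

theorem EuclideanSpace.exists_iff_exists_sumElim {ι κ : Type*}
    {P : EuclideanSpace ℝ (ι ⊕ κ) → Prop} :
    (∃ x, P x) ↔ ∃ a b, P (toLp 2 (Sum.elim a b)) :=
  ⟨fun ⟨x, hx⟩ => ⟨ofLp x ∘ Sum.inl, ofLp x ∘ Sum.inr, by rwa [Sum.elim_comp_inl_inr]⟩,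
    fun ⟨_, _, h⟩ => ⟨_, h⟩⟩

namespace Matrix

variable {n : Type*} [Fintype n]

theorem inner_toEuclideanCLM_toLp_mulVec [DecidableEq n] (T S : Matrix n n ℝ) (hTS : Tᵀ * S = 1)
    (w x : EuclideanSpace ℝ n) :
    ⟪toEuclideanCLM (𝕜 := ℝ) T x, toLp 2 (S *ᵥ ofLp w)⟫_ℝ = ⟪w, x⟫_ℝ := by
  rw [EuclideanSpace.inner_eq_star_dotProduct, EuclideanSpace.inner_eq_star_dotProduct]
  simp only [ofLp_toEuclideanCLM, star_trivial]
  rw [dotProduct_mulVec, ← mulVec_transpose, mulVec_mulVec, hTS, one_mulVec, dotProduct_comm]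

theorem isLeast_norm_mulVec_add_norm_mulVec_sSup {ι κ : Type*} [Fintype ι] [Fintype κ]
    [DecidableEq ι] [DecidableEq κ] (T₁ T₂ S₁ S₂ : Matrix (ι ⊕ κ) (ι ⊕ κ) ℝ)
    (h₁ : T₁ᵀ * S₁ = 1) (h₂ : T₂ᵀ * S₂ = 1) (a : ι → ℝ) (b : κ → ℝ) :
    IsLeast {s | ∃ a₁ b₁ a₂ b₂, a = a₁ + a₂ ∧ b = b₁ + b₂ ∧
        s = ‖toLp 2 (T₁ *ᵥ Sum.elim a₁ b₁)‖ + ‖toLp 2 (T₂ *ᵥ Sum.elim a₂ b₂)‖}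
      (sSup {r | ∃ m n, ‖toLp 2 (S₁ *ᵥ Sum.elim m n)‖ ≤ 1 ∧
        ‖toLp 2 (S₂ *ᵥ Sum.elim m n)‖ ≤ 1 ∧ r = m ⬝ᵥ a + n ⬝ᵥ b}) := by
  have h := isLeast_norm_add_norm_sSup_inner (toEuclideanCLM (𝕜 := ℝ) T₁)
    (toEuclideanCLM (𝕜 := ℝ) T₂) (fun w => toLp 2 (S₁ *ᵥ ofLp w))
    (fun w => toLp 2 (S₂ *ᵥ ofLp w))
    (inner_toEuclideanCLM_toLp_mulVec T₁ S₁ h₁) (inner_toEuclideanCLM_toLp_mulVec T₂ S₂ h₂)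
    (toLp 2 (Sum.elim a b))
  simp only [EuclideanSpace.exists_iff_exists_sumElim, EuclideanSpace.inner_toLp_toLp, star_trivial,
    toEuclideanCLM_toLp, ← toLp_add, ← Sum.elim_add_add, (toLp_injective 2).eq_iff,
    Sum.elim_eq_iff, and_assoc, sumElim_dotProduct_sumElim] at h
  simpa only [dotProduct_comm a, dotProduct_comm b] using h

/-- The factor `R̃ᵢ` of the paper, for `a = αᵢ` and `b = √(1 - αᵢ²)`: `fᵢ(w) = ‖R̃ᵢ w‖²` and
`Tᵢ = R̃ᵢ^{-T}`. -/
noncomputable def ilyushinFactor (R : Matrix n n ℝ) (np mp a b : ℝ) : Matrix (n ⊕ n) (n ⊕ n) ℝ :=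
  fromBlocks ((a / mp) • R) (np⁻¹ • R) ((b / mp) • R) 0

theorem transpose_mul_ilyushinFactor [DecidableEq n] (R : Matrix n n ℝ) (hR : IsUnit R.det)
    {np mp b : ℝ} (a : ℝ) (hnp : np ≠ 0) (hmp : mp ≠ 0) (hb : b ≠ 0) :
    (fromBlocks 0 (np • (Rᵀ)⁻¹) ((mp / b) • (Rᵀ)⁻¹) (-((a * np / b) • (Rᵀ)⁻¹)))ᵀ *
      ilyushinFactor R np mp a b = 1 := by
  have hRR : R⁻¹ * R = 1 := nonsing_inv_mul R hR
  simp only [ilyushinFactor, fromBlocks_transpose, fromBlocks_multiply, transpose_zero,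
    transpose_smul, transpose_neg, transpose_nonsing_inv, transpose_transpose, smul_mul_smul_comm,
    neg_mul, hRR, zero_mul, mul_zero, zero_add, add_zero]
  have hdiag : mp / b * (b / mp) = 1 := by field_simp
  have hoff : a * np / b * (b / mp) = np * (a / mp) := by field_simp
  rw [hdiag, hoff, mul_inv_cancel₀ hnp, one_smul, add_neg_cancel, fromBlocks_one]

theorem mulVec_dotProduct_mulVec (R : Matrix n n ℝ) (x y : n → ℝ) :
    (R *ᵥ x) ⬝ᵥ (R *ᵥ y) = x ⬝ᵥ (Rᵀ * R) *ᵥ y := by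
  rw [← mulVec_mulVec, dotProduct_mulVec x Rᵀ, vecMul_transpose]

theorem ilyushinFactor_mulVec_dotProduct_self (R : Matrix n n ℝ) (np mp a b : ℝ) (m v : n → ℝ) :
    (ilyushinFactor R np mp a b *ᵥ Sum.elim m v) ⬝ᵥ (ilyushinFactor R np mp a b *ᵥ Sum.elim m v) =
      v ⬝ᵥ (Rᵀ * R) *ᵥ v / np ^ 2 + (a ^ 2 + b ^ 2) * (m ⬝ᵥ (Rᵀ * R) *ᵥ m) / mp ^ 2
        + 2 * a * (m ⬝ᵥ (Rᵀ * R) *ᵥ v) / (np * mp) := by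
  simp only [ilyushinFactor, fromBlocks_mulVec, Sum.elim_comp_inl, Sum.elim_comp_inr,
    sumElim_dotProduct_sumElim, smul_mulVec, zero_mulVec, add_zero]
  rw [← mulVec_dotProduct_mulVec, ← mulVec_dotProduct_mulVec, ← mulVec_dotProduct_mulVec]
  simp only [dotProduct_add, add_dotProduct, dotProduct_smul, smul_dotProduct, smul_eq_mul]
  rw [dotProduct_comm (R *ᵥ v) (R *ᵥ m)]
  field_simp
  ring

end Matrix

theorem det_ilyushinR :
    (!![Real.sqrt 3 / 2, 0, 0; -1/2, 1, 0; 0, 0, Real.sqrt 3] : Matrix (Fin 3) (Fin 3) ℝ).det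
      = 3 / 2 := by
  simp only [det_fin_three, Fin.isValue, of_apply, cons_val', cons_val_zero, cons_val_fin_one,
    cons_val_one, mul_one, cons_val, mul_zero, sub_zero, zero_mul, add_zero]
  linear_combination (1 / 2 : ℝ) * Real.mul_self_sqrt (show (0 : ℝ) ≤ 3 by norm_num)

theorem transpose_mul_self_ilyushinR :
    (!![Real.sqrt 3 / 2, 0, 0; -1/2, 1, 0; 0, 0, Real.sqrt 3] : Matrix (Fin 3) (Fin 3) ℝ)ᵀ *
      !![Real.sqrt 3 / 2, 0, 0; -1/2, 1, 0; 0, 0, Real.sqrt 3] =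
      !![1, -1/2, 0; -1/2, 1, 0; 0, 0, 3] := by
  have h3 : Real.sqrt 3 * Real.sqrt 3 = 3 := Real.mul_self_sqrt (by norm_num)
  ext i j
  fin_cases i <;> fin_cases j <;> simp [mul_apply, Fin.sum_univ_three, h3]
  linear_combination h3 / 4

theorem sq_neg_one_pow_div_two_sqrt_three (i : ℕ) :
    ((-1 : ℝ) ^ i / (2 * Real.sqrt 3)) ^ 2 = 1 / 12 := by
  rw [div_pow, mul_pow, ← pow_mul, pow_mul', neg_one_sq, one_pow,
    Real.sq_sqrt (by norm_num : (0 : ℝ) ≤ 3)]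
  norm_num

/-- Dissipation power area-density of the (two-branch) approximate Ilyushin
criterion: the supremum of `mᵀκ + nᵀε` over `{f₁ ≤ 1} ∩ {f₂ ≤ 1}` equals the
minimum, over decompositions `(κ, ε) = (κ₁, ε₁) + (κ₂, ε₂)`, of
`‖T₁·(κ₁, ε₁)‖ + ‖T₂·(κ₂, ε₂)‖`, and this minimum is attained. -/
theorem ilyushin_dissipation_infimal_convolution
    (P R : Matrix (Fin 3) (Fin 3) ℝ)
    (hP : P = !![1, -1/2, 0; -1/2, 1, 0; 0, 0, 3])
    (hR : R = !![Real.sqrt 3 / 2, 0, 0; -1/2, 1, 0; 0, 0, Real.sqrt 3])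
    (np mp : ℝ) (hnp : 0 < np) (hmp : 0 < mp)
    (α : ℕ → ℝ) (hα : ∀ i, α i = (-1 : ℝ) ^ i / (2 * Real.sqrt 3))
    (f : ℕ → (Fin 3 → ℝ) → (Fin 3 → ℝ) → ℝ)
    (hf : ∀ i m n, f i m n
        = n ⬝ᵥ P.mulVec n / np ^ 2 + m ⬝ᵥ P.mulVec m / mp ^ 2
          + ((-1 : ℝ) ^ i / Real.sqrt 3) * (m ⬝ᵥ P.mulVec n) / (np * mp))
    (T : ℕ → Matrix (Fin 3 ⊕ Fin 3) (Fin 3 ⊕ Fin 3) ℝ)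
    (hT : ∀ i, T i = Matrix.fromBlocks
        (0 : Matrix (Fin 3) (Fin 3) ℝ) (np • (Rᵀ)⁻¹)
        ((mp / Real.sqrt (1 - (α i) ^ 2)) • (Rᵀ)⁻¹)
        (-((α i * np / Real.sqrt (1 - (α i) ^ 2)) • (Rᵀ)⁻¹)))
    (κ ε : Fin 3 → ℝ) :
    IsLeast
      {s : ℝ | ∃ κ₁ ε₁ κ₂ ε₂ : Fin 3 → ℝ, κ = κ₁ + κ₂ ∧ ε = ε₁ + ε₂ ∧
        s = ‖(WithLp.equiv 2 ((Fin 3 ⊕ Fin 3) → ℝ)).symm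
              ((T 1).mulVec (Sum.elim κ₁ ε₁))‖
          + ‖(WithLp.equiv 2 ((Fin 3 ⊕ Fin 3) → ℝ)).symm
              ((T 2).mulVec (Sum.elim κ₂ ε₂))‖}
      (sSup {r : ℝ | ∃ m n : Fin 3 → ℝ,
        f 1 m n ≤ 1 ∧ f 2 m n ≤ 1 ∧ r = m ⬝ᵥ κ + n ⬝ᵥ ε}) := by
  set β : ℕ → ℝ := fun i => Real.sqrt (1 - α i ^ 2)
  set S : ℕ → Matrix (Fin 3 ⊕ Fin 3) (Fin 3 ⊕ Fin 3) ℝ :=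
    fun i => ilyushinFactor R np mp (α i) (β i)
  have hα2 : ∀ i, α i ^ 2 = 1 / 12 := fun i => by rw [hα, sq_neg_one_pow_div_two_sqrt_three]
  have hβ2 : ∀ i, β i ^ 2 = 1 - α i ^ 2 := fun i => Real.sq_sqrt (by rw [hα2]; norm_num)
  have hβ0 : ∀ i, β i ≠ 0 := fun i => (Real.sqrt_pos.mpr (by rw [hα2]; norm_num)).ne'
  have h2α : ∀ i, (-1 : ℝ) ^ i / Real.sqrt 3 = 2 * α i := fun i => by rw [hα]; field_simp
  have hRR : Rᵀ * R = P := by rw [hR, hP, transpose_mul_self_ilyushinR]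
  have hTS : ∀ i, (T i)ᵀ * S i = 1 := fun i => by
    rw [hT]
    exact transpose_mul_ilyushinFactor R (by rw [hR, det_ilyushinR]; norm_num) _ hnp.ne' hmp.ne'
      (hβ0 i)
  have hfS : ∀ i m n, f i m n = ‖toLp 2 (S i *ᵥ Sum.elim m n)‖ ^ 2 := fun i m n => by
    rw [EuclideanSpace.norm_toLp_sq, ilyushinFactor_mulVec_dotProduct_self, hf, hRR, hβ2, h2α]
    ring
  simp only [hfS, sq_le_one_iff₀ (norm_nonneg _)]
  exact isLeast_norm_mulVec_add_norm_mulVec_sSup (T 1) (T 2) (S 1) (S 2) (hTS 1) (hTS 2) κ ε
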